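/- arXiv:2410.19505 — 2 statements merged into one kernel-verified Lean document; each statement's English description precedes it below -/
import Mathlib

section
/- Every well-configured C-datum is rigid. (This is the combinatorial form of the paper's proposition: every well-configured C-pair is a basic τ_d-rigid pair.) -/
open scoped Classical

/-- The numerical setup under which the truncated linear Nakayama algebra `Λ(n,l)`
admits a `d`-cluster tilting subcategory, together with the integers `s i`
(defined by `2 * s i = …`). -/
structure NakSetup where
  n : ℤ
  l : ℤ
  d : ℤ
  p : ℤ
  s : ℤ → ℤ
  hl : 2 ≤ l
  hd : 2 ≤ d
  hp : 1 ≤ p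
  hn : 2 * n = (p - 1) * ((d - 1) * l + 2) + l
  hcase : l = 2 ∨ (2 < l ∧ Even d ∧ Even p)
  hs_odd : ∀ i, 1 ≤ i → i ≤ p → Odd i → 2 * s i = (i - 1) * (d - 1) * l + 2 * i
  hs_even : ∀ i, 1 ≤ i → i ≤ p → Even i → 2 * s i = (i - 1) * ((d - 1) * l + 2) + l

/-- A `C`-datum: subsets `X i ⊆ [1, l-1]` for `2 ≤ i ≤ p` (empty outside this range)
together with disjoint subsets `R, B ⊆ [1, n]`. -/
structure CDatum (S : NakSetup) where
  X : ℤ → Finset ℤ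
  R : Finset ℤ
  B : Finset ℤ
  hX : ∀ i, X i ⊆ Finset.Icc 1 (S.l - 1)
  hXout : ∀ i, ¬(2 ≤ i ∧ i ≤ S.p) → X i = ∅
  hR : R ⊆ Finset.Icc 1 S.n
  hB : B ⊆ Finset.Icc 1 S.n
  hRB : Disjoint R B

namespace CDatum

variable {S : NakSetup}

/-- `m i = |X i|` (as an integer). -/
noncomputable def m (D : CDatum S) (i : ℤ) : ℤ := (D.X i).card

/-- `l_i`: the minimum of `X i`, or `l` if `X i = ∅`. -/
noncomputable def lo (D : CDatum S) (i : ℤ) : ℤ :=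
  if h : (D.X i).Nonempty then (D.X i).min' h else S.l

/-- `n_i`: the maximum of `X i`, or `0` if `X i = ∅`. -/
noncomputable def hi (D : CDatum S) (i : ℤ) : ℤ :=
  if h : (D.X i).Nonempty then (D.X i).max' h else 0

/-- The interval `𝖡_i`. -/
noncomputable def BI (D : CDatum S) (i : ℤ) : Finset ℤ :=
  if Odd i then Finset.Icc (S.s i) (S.s i + D.hi i - 1)
  else Finset.Icc (S.s i - D.hi i + 1) (S.s i)

/-- The interval `𝖱_i`. -/
noncomputable def RI (D : CDatum S) (i : ℤ) : Finset ℤ :=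
  if Odd i then Finset.Icc (S.s (i - 1) - (S.l - D.lo i) + 1) (S.s (i - 1))
  else Finset.Icc (S.s (i - 1)) (S.s (i - 1) + (S.l - D.lo i) - 1)

/-- A `C`-datum is rigid (the combinatorial form of being a `τ_d`-rigid pair). -/
def Rigid (D : CDatum S) : Prop :=
  (∀ x ∈ D.B, ∀ y ∈ D.R, x < y →
      ∃ z, x < z ∧ z + S.l - 2 < y ∧ Finset.Icc z (z + S.l - 2) ∩ (D.R ∪ D.B) = ∅) ∧
  (∀ i, 2 ≤ i → i ≤ S.p → Odd i →
      D.hi (i - 1) + D.hi i ≤ S.l - 1 ∧ S.l + 1 ≤ D.lo i + D.lo (i + 1) ∧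
      (S.d = 2 → D.hi i ≤ D.lo (i + 2) + 1 ∧ D.hi (i - 2) ≤ D.lo i + 1)) ∧
  (∀ i, 2 ≤ i → i ≤ S.p → Even i →
      D.hi i + D.hi (i + 1) ≤ S.l - 1 ∧ S.l + 1 ≤ D.lo (i - 1) + D.lo i) ∧
  (∀ i, 2 ≤ i → i ≤ S.p → D.R ∩ D.RI i = ∅ ∧ D.B ∩ D.BI i = ∅)

/-- The left endpoint of `Ξ(i, i+k)` (the left endpoint of `𝖱_i`). -/
noncomputable def xiLo (D : CDatum S) (i : ℤ) : ℤ :=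
  if Odd i then S.s (i - 1) - (S.l - D.lo i) + 1 else S.s (i - 1)

/-- The right endpoint of `Ξ(i, i+k)`, depending on `j = i + k`
(the right endpoint of `𝖡_{i+k}`). -/
noncomputable def xiHi (D : CDatum S) (j : ℤ) : ℤ :=
  if Even j then S.s j else S.s j + D.hi j - 1

/-- The interval `Ξ(i, i+k)`. -/
noncomputable def Xi (D : CDatum S) (i k : ℤ) : Finset ℤ :=
  Finset.Icc (D.xiLo i) (D.xiHi (i + k))

/-- The union `𝖡_2 ∪ … ∪ 𝖡_p`. -/
noncomputable def BigB (D : CDatum S) : Finset ℤ :=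
  (Finset.Icc 2 S.p).biUnion fun i => D.BI i

/-- The union `𝖱_2 ∪ … ∪ 𝖱_p`. -/
noncomputable def BigR (D : CDatum S) : Finset ℤ :=
  (Finset.Icc 2 S.p).biUnion fun i => D.RI i

/-- The interval `I` is support. -/
def IsSupport (D : CDatum S) (I : Finset ℤ) : Prop :=
  D.R ∩ I = ∅ ∧ D.B ∩ I = I \ D.BigB

/-- The interval `I` is rigid. -/
def IsRigidI (D : CDatum S) (I : Finset ℤ) : Prop :=
  D.B ∩ I = ∅ ∧ D.R ∩ I = I \ D.BigR

/-- The interval `I` is support to rigid at `x ∈ I`. -/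
def IsSuppToRigid (D : CDatum S) (I : Finset ℤ) (x : ℤ) : Prop :=
  x ∈ I ∧ D.B ∩ I = {y ∈ I | y ≤ x} ∧ (D.B ∩ I).Nonempty ∧
    D.R ∩ I = {y ∈ I | x + S.l ≤ y} ∧ (D.R ∩ I).Nonempty

/-- The interval `I` is rigid to support at `x ∈ I`. -/
def IsRigidToSupp (D : CDatum S) (I : Finset ℤ) (x : ℤ) : Prop :=
  x ∈ I ∧ D.R ∩ I = {y ∈ I | y ≤ x} ∧ (D.R ∩ I).Nonempty ∧
    D.B ∩ I = {y ∈ I | x + 1 ≤ y} ∧ (D.B ∩ I).Nonempty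

/-- `(X_i, …, X_{i+k})` is an admissible configuration (types (I)–(VIII)). -/
def Admissible (D : CDatum S) (i k : ℤ) : Prop :=
  2 ≤ i ∧ i + k ≤ S.p ∧ 0 ≤ k ∧
  (∀ j, 0 ≤ j → j ≤ k → (D.X (i + j)).Nonempty) ∧
  ((k = 0 ∧ D.lo i = 1 ∧ D.hi i < S.l - 1 ∧ D.IsSupport (D.Xi i k)) ∨
   (k = 0 ∧ 1 < D.lo i ∧ D.hi i = S.l - 1 ∧ D.IsRigidI (D.Xi i k)) ∨
   (k = 0 ∧ D.lo i = 1 ∧ D.hi i = S.l - 1 ∧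
     (D.IsSupport (D.Xi i k) ∨ D.IsRigidI (D.Xi i k) ∨
       ∃ x ∈ D.Xi i k \ D.BI i, D.IsSuppToRigid (D.Xi i k) x)) ∨
   (k = 1 ∧ Odd i ∧ D.hi i = S.l - 1 ∧ D.hi (i + 1) = S.l - 1 ∧
     D.m i + D.m (i + 1) < S.l - 1 ∧ D.IsRigidI (D.Xi i k)) ∨
   (k = 1 ∧ Even i ∧ D.lo i = 1 ∧ D.lo (i + 1) = 1 ∧
     D.m i + D.m (i + 1) < S.l - 1 ∧ D.IsSupport (D.Xi i k)) ∨
   (k = 1 ∧ Odd i ∧ D.hi i = S.l - 1 ∧ D.hi (i + 1) = S.l - 1 ∧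
     D.m i + D.m (i + 1) = S.l - 1 ∧
     (D.IsRigidI (D.Xi i k) ∨
       ∃ x ∈ Finset.Icc (S.s i - (S.l - D.m (i + 1))) (S.s i - 1),
         D.IsSuppToRigid (D.Xi i k) x)) ∨
   (k = 1 ∧ Even i ∧ D.lo i = 1 ∧ D.lo (i + 1) = 1 ∧
     D.m i + D.m (i + 1) = S.l - 1 ∧
     (D.IsSupport (D.Xi i k) ∨
       ∃ x ∈ Finset.Icc (S.s i - (S.l - 1)) (S.s i - D.m i),
         D.IsSuppToRigid (D.Xi i k) x)) ∨
   (k = 2 ∧ S.d = 2 ∧ Even i ∧ D.lo i = 1 ∧ D.lo (i + 1) = S.l - D.lo (i + 2) + 1 ∧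
     D.hi (i + 1) = S.l - D.hi i - 1 ∧ D.hi (i + 2) = S.l - 1 ∧
     ∃ x ∈ Finset.Icc (S.s (i + 1) - D.lo (i + 2)) (S.s i - D.hi i),
       D.IsSuppToRigid (D.Xi i k) x))

/-- The configuration on `[i, i+k]` is full: `m_{i+j} = n_{i+j} - l_{i+j} + 1`. -/
def Full (D : CDatum S) (i k : ℤ) : Prop :=
  ∀ j, 0 ≤ j → j ≤ k → D.m (i + j) = D.hi (i + j) - D.lo (i + j) + 1

/-- `[a, b]` is a maximal run of indices with `X` nonempty
(an interval of the diagonal partition). -/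
def IsBlock (D : CDatum S) (a b : ℤ) : Prop :=
  2 ≤ a ∧ b ≤ S.p ∧ a ≤ b ∧ (∀ j, a ≤ j → j ≤ b → (D.X j).Nonempty) ∧
    D.X (a - 1) = ∅ ∧ D.X (b + 1) = ∅

/-- `[a, b]` is the first interval of the diagonal partition. -/
def FirstBlock (D : CDatum S) (a b : ℤ) : Prop :=
  D.IsBlock a b ∧ ∀ j, j < a → D.X j = ∅

/-- `[a, b]` is the last interval of the diagonal partition. -/
def LastBlock (D : CDatum S) (a b : ℤ) : Prop :=
  D.IsBlock a b ∧ ∀ j, b < j → D.X j = ∅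

/-- `[a, b]` and `[a', b']` are consecutive intervals of the diagonal partition. -/
def ConsecBlocks (D : CDatum S) (a b a' b' : ℤ) : Prop :=
  D.IsBlock a b ∧ D.IsBlock a' b' ∧ b < a' ∧ ∀ j, b < j → j < a' → D.X j = ∅

/-- The diagonal component `T = {i ∈ [2, p] : X i ≠ ∅}`. -/
noncomputable def T (D : CDatum S) : Finset ℤ :=
  {i ∈ Finset.Icc 2 S.p | (D.X i).Nonempty}

/-- The configuration on the block `[a, b]` is full admissible of type (III). -/
def FullType3 (D : CDatum S) (a b : ℤ) : Prop :=
  a = b ∧ D.lo a = 1 ∧ D.hi a = S.l - 1 ∧ D.m a = S.l - 1 ∧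
    (D.IsSupport (D.Xi a 0) ∨ D.IsRigidI (D.Xi a 0) ∨
      ∃ x ∈ D.Xi a 0 \ D.BI a, D.IsSuppToRigid (D.Xi a 0) x)

/-- A `Θ`-interval is rigid, support, or rigid to support. -/
def GoodTheta (D : CDatum S) (I : Finset ℤ) : Prop :=
  D.IsRigidI I ∨ D.IsSupport I ∨ ∃ x, D.IsRigidToSupp I x

/-- A `C`-datum is well-configured. -/
def WellConfigured (D : CDatum S) : Prop :=
  (D.T = ∅ ∧ ∃ x, 0 ≤ x ∧ x ≤ S.n ∧ D.R = Finset.Icc 1 x ∧ D.B = Finset.Icc (x + 1) S.n) ∨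
  (D.T.Nonempty ∧
    (∀ a b, D.IsBlock a b → D.Admissible a (b - a) ∧ D.Full a (b - a)) ∧
    (∀ a b a' b', D.ConsecBlocks a b a' b' →
      D.Xi a (b - a) ∩ D.Xi a' (b' - a') = ∅) ∧
    (∀ a b, D.FirstBlock a b → D.GoodTheta (Finset.Icc 1 (D.xiLo a - 1))) ∧
    (∀ a b a' b', D.ConsecBlocks a b a' b' →
      D.GoodTheta (Finset.Icc (D.xiHi b + 1) (D.xiLo a' - 1))) ∧
    (∀ a b, D.LastBlock a b → D.GoodTheta (Finset.Icc (D.xiHi b + 1) S.n)) ∧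
    (∀ a b, D.FirstBlock a b → D.IsRigidI (D.Xi a (b - a)) →
      D.IsRigidI (Finset.Icc 1 (D.xiLo a - 1)) ∨ D.FullType3 a b) ∧
    (∀ a b a' b', D.ConsecBlocks a b a' b' → D.IsRigidI (D.Xi a' (b' - a')) →
      D.IsRigidI (Finset.Icc (D.xiHi b + 1) (D.xiLo a' - 1)) ∨ D.FullType3 a' b') ∧
    (∀ a b a' b', D.ConsecBlocks a b a' b' → D.IsSupport (D.Xi a (b - a)) →
      D.IsSupport (Finset.Icc (D.xiHi b + 1) (D.xiLo a' - 1)) ∨ D.FullType3 a b) ∧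
    (∀ a b, D.LastBlock a b → D.IsSupport (D.Xi a (b - a)) →
      D.IsSupport (Finset.Icc (D.xiHi b + 1) S.n) ∨ D.FullType3 a b))

/-- The summand count `|R| + |B| + Σ_{i=2}^p m_i`. -/
noncomputable def count (D : CDatum S) : ℤ :=
  (D.R.card : ℤ) + (D.B.card : ℤ) + ∑ i ∈ Finset.Icc 2 S.p, D.m i

end CDatum

/-!
Conditions (b1)–(b3) are local to a block, a maximal run of consecutive nonempty diagonals: the
admissible type of the block, fullness, and the disjointness of consecutive intervals `Ξ` turn
them into inequalities between the integers `s i`.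

For condition (a) it suffices that after every `u ∈ B` the first point of `R ∪ B` is in `B` or
at distance at least `l` from `u` (`SafeAfter`). This is checked by locating `u` in some `Ξ`,
where the admissible type fixes the pattern of `R` and `B`, or in some `Θ`, which is rigid,
support, or rigid to support. Leaving a `Θ` into a rigid `Ξ` is handled by condition (iv), which
forces `l_a = 1` so that `𝖱_a` is a gap of length `l - 1`; leaving a support `Ξ` through a short
last chunk `𝖡_b` is handled by condition (v) or, when no `Θ` follows, by the position of the
next block.
-/

namespace NakSetup

variable (S : NakSetup) {i j : ℤ}

theorem two_mul_s_of_even (h2 : 2 ≤ i) (hp : i ≤ S.p) (he : Even i) :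
    2 * S.s i = 2 * S.s (i - 1) + S.d * S.l := by
  linear_combination S.hs_even i (by omega) hp he -
    S.hs_odd (i - 1) (by omega) (by omega) (he.sub_odd odd_one)

theorem two_mul_s_of_odd (h3 : 3 ≤ i) (hp : i ≤ S.p) (ho : Odd i) :
    2 * S.s i = 2 * S.s (i - 1) + (S.d - 2) * S.l + 4 := by
  linear_combination S.hs_odd i (by omega) hp ho -
    S.hs_even (i - 1) (by omega) (by omega) (ho.sub_odd odd_one)

theorem s_sub_one_add_l_le_of_even (h2 : 2 ≤ i) (hp : i ≤ S.p) (he : Even i) :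
    S.s (i - 1) + S.l ≤ S.s i := by
  nlinarith [S.two_mul_s_of_even h2 hp he, S.hd, S.hl]

theorem s_sub_one_add_two_le (h2 : 2 ≤ i) (hp : i ≤ S.p) : S.s (i - 1) + 2 ≤ S.s i := by
  rcases Int.even_or_odd i with he | ho
  · linarith [S.s_sub_one_add_l_le_of_even h2 hp he, S.hl]
  · have h3 : 3 ≤ i := by obtain ⟨t, rfl⟩ := ho; omega
    nlinarith [S.two_mul_s_of_odd h3 hp ho, S.hd, S.hl]

theorem s_eq_of_even_of_d_eq_two (hd : S.d = 2) (h2 : 2 ≤ i) (hp : i ≤ S.p) (he : Even i) :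
    S.s i = S.s (i - 1) + S.l := by
  have := S.two_mul_s_of_even h2 hp he
  rw [hd] at this
  linarith

theorem s_eq_of_odd_of_d_eq_two (hd : S.d = 2) (h3 : 3 ≤ i) (hp : i ≤ S.p) (ho : Odd i) :
    S.s i = S.s (i - 1) + 2 := by
  have := S.two_mul_s_of_odd h3 hp ho
  rw [hd] at this
  linarith

theorem s_add_two_mul_le (h1 : 1 ≤ i) (hij : i ≤ j) (hjp : j ≤ S.p) :
    S.s i + 2 * (j - i) ≤ S.s j := by
  induction j, hij using Int.leInduction with
  | base => simp
  | succ k hik ih =>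
    have := S.s_sub_one_add_two_le (i := k + 1) (by omega) hjp
    rw [add_sub_cancel_right] at this
    linarith [ih (by omega)]

theorem s_add_l_le_of_odd (h1 : 1 ≤ i) (ho : Odd i) (hij : i < j) (hjp : j ≤ S.p) :
    S.s i + S.l ≤ S.s j := by
  have := S.s_sub_one_add_l_le_of_even (i := i + 1) (by omega) (by omega) ho.add_one
  rw [add_sub_cancel_right] at this
  linarith [S.s_add_two_mul_le (i := i + 1) (by omega) hij hjp]

theorem s_add_l_add_two_le (h1 : 1 ≤ i) (hij : i + 2 ≤ j) (hjp : j ≤ S.p) :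
    S.s i + S.l + 2 ≤ S.s j := by
  rcases Int.even_or_odd i with he | ho
  · have h := S.s_sub_one_add_l_le_of_even (i := i + 2) (by omega) (by omega)
      (by simpa [parity_simps] using he)
    have h' := S.s_sub_one_add_two_le (i := i + 1) (by omega) (by omega)
    rw [show i + 2 - 1 = i + 1 by ring] at h
    rw [add_sub_cancel_right] at h'
    linarith [S.s_add_two_mul_le (i := i + 2) (by omega) hij hjp]
  · linarith [S.s_add_l_le_of_odd h1 ho (j := i + 1) (by omega) (by omega),
      S.s_add_two_mul_le (i := i + 1) (by omega) (by omega) hjp]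

end NakSetup

theorem Int.exists_maximal_run {P : ℤ → Prop} {i lo hi : ℤ} (hPi : P i)
    (hbdd : ∀ j, P j → lo ≤ j ∧ j ≤ hi) :
    ∃ a b, a ≤ i ∧ i ≤ b ∧ (∀ j, a ≤ j → j ≤ b → P j) ∧ ¬ P (a - 1) ∧ ¬ P (b + 1) := by
  obtain ⟨a, ⟨hai, hrunA⟩, hmin⟩ := Int.exists_least_of_bdd
    (P := fun a => a ≤ i ∧ ∀ j, a ≤ j → j ≤ i → P j)
    ⟨lo, fun a ha => (hbdd a (ha.2 a le_rfl ha.1)).1⟩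
    ⟨i, le_rfl, fun j h1 h2 => le_antisymm h2 h1 ▸ hPi⟩
  obtain ⟨b, ⟨hib, hrunB⟩, hmax⟩ := Int.exists_greatest_of_bdd
    (P := fun b => i ≤ b ∧ ∀ j, i ≤ j → j ≤ b → P j)
    ⟨hi, fun b hb => (hbdd b (hb.2 b hb.1 le_rfl)).2⟩
    ⟨i, le_rfl, fun j h1 h2 => le_antisymm h2 h1 ▸ hPi⟩
  refine ⟨a, b, hai, hib, fun j h1 h2 => ?_, fun ha => ?_, fun hb => ?_⟩
  · rcases le_total j i with h | h
    exacts [hrunA j h1 h, hrunB j h h2]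
  · have := hmin (a - 1) ⟨by omega, fun j h1 h2 => ?_⟩
    · omega
    · rcases eq_or_lt_of_le h1 with rfl | h1
      exacts [ha, hrunA j (by omega) h2]
  · have := hmax (b + 1) ⟨by omega, fun j h1 h2 => ?_⟩
    · omega
    · rcases eq_or_lt_of_le h2 with rfl | h2
      exacts [hb, hrunB j h1 (by omega)]

section SafeAfter

variable {R B : Finset ℤ} {l u : ℤ}

def SafeAfter (R B : Finset ℤ) (l u : ℤ) : Prop :=
  ∃ c, u < c ∧ (∀ w, u < w → w < c → w ∉ R ∧ w ∉ B) ∧ (c ∈ B ∨ u + l ≤ c)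

theorem safeAfter_of_add_one_mem (h : u + 1 ∈ B) : SafeAfter R B l u :=
  ⟨u + 1, by omega, fun w h₁ h₂ => by omega, Or.inl h⟩

theorem safeAfter_of_free (hl : 0 < l) (h : ∀ w, u < w → w < u + l → w ∉ R ∧ w ∉ B) :
    SafeAfter R B l u :=
  ⟨u + l, by omega, h, Or.inr le_rfl⟩

theorem exists_gap_of_safeAfter (hRB : Disjoint R B) (h : ∀ u ∈ B, SafeAfter R B l u) {x y : ℤ}
    (hx : x ∈ B) (hy : y ∈ R) (hxy : x < y) :
    ∃ z, x < z ∧ z + l - 2 < y ∧ Finset.Icc z (z + l - 2) ∩ (R ∪ B) = ∅ := by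
  have hne : (B.filter fun w => x ≤ w ∧ w < y).Nonempty := ⟨x, by simp [hx, hxy]⟩
  set x' := (B.filter fun w => x ≤ w ∧ w < y).max' hne
  have hx' := Finset.mem_filter.1 (Finset.max'_mem _ hne)
  have hmax : ∀ w ∈ B, x ≤ w → w < y → w ≤ x' := fun w hw h₁ h₂ =>
    Finset.le_max' _ w (Finset.mem_filter.2 ⟨hw, h₁, h₂⟩)
  obtain ⟨c, hx'c, hfree, hc⟩ := h x' hx'.1
  have hcy : c ≤ y := by
    by_contra! hyc
    exact (hfree y (by omega) hyc).1 hy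
  have hc : x' + l ≤ c := by
    refine hc.resolve_left fun hcB => ?_
    rcases eq_or_lt_of_le hcy with rfl | hcy
    · exact Finset.disjoint_left.1 hRB hy hcB
    · linarith [hmax c hcB (by omega) hcy]
  refine ⟨x' + 1, by omega, by omega, Finset.eq_empty_of_forall_notMem fun w hw => ?_⟩
  rw [Finset.mem_inter, Finset.mem_Icc, Finset.mem_union] at hw
  obtain ⟨hR, hB⟩ := hfree w (by omega) (by omega)
  tauto

end SafeAfter

namespace CDatum

variable {S : NakSetup}

section Basic

variable (D : CDatum S) {i w : ℤ}

theorem mem_X (hw : w ∈ D.X i) : 1 ≤ w ∧ w ≤ S.l - 1 := Finset.mem_Icc.1 (D.hX i hw)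

theorem one_le_lo (i : ℤ) : 1 ≤ D.lo i := by
  unfold lo
  split_ifs with h
  · exact (D.mem_X (Finset.min'_mem _ h)).1
  · linarith [S.hl]

theorem lo_le (i : ℤ) : D.lo i ≤ S.l := by
  unfold lo
  split_ifs with h
  · linarith [(D.mem_X (Finset.min'_mem _ h)).2]
  · rfl

theorem hi_nonneg (i : ℤ) : 0 ≤ D.hi i := by
  unfold hi
  split_ifs with h
  · linarith [(D.mem_X (Finset.max'_mem _ h)).1]
  · rfl

theorem hi_le (i : ℤ) : D.hi i ≤ S.l - 1 := by
  unfold hi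
  split_ifs with h
  · exact (D.mem_X (Finset.max'_mem _ h)).2
  · linarith [S.hl]

theorem lo_le_hi (h : (D.X i).Nonempty) : D.lo i ≤ D.hi i := by
  rw [lo, hi, dif_pos h, dif_pos h]
  exact Finset.min'_le _ _ (Finset.max'_mem _ h)

theorem lo_of_eq_empty (h : D.X i = ∅) : D.lo i = S.l := by
  rw [lo, dif_neg (by simp [h])]

theorem hi_of_eq_empty (h : D.X i = ∅) : D.hi i = 0 := by
  rw [hi, dif_neg (by simp [h])]

theorem mem_Icc_of_nonempty (h : (D.X i).Nonempty) : 2 ≤ i ∧ i ≤ S.p := by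
  by_contra hc
  simp [D.hXout i hc] at h

theorem mem_BI_of_odd (ho : Odd i) : w ∈ D.BI i ↔ S.s i ≤ w ∧ w ≤ S.s i + D.hi i - 1 := by
  rw [BI, if_pos ho, Finset.mem_Icc]

theorem mem_BI_of_even (he : Even i) : w ∈ D.BI i ↔ S.s i - D.hi i + 1 ≤ w ∧ w ≤ S.s i := by
  rw [BI, if_neg (Int.not_odd_iff_even.2 he), Finset.mem_Icc]

theorem mem_RI_of_odd (ho : Odd i) :
    w ∈ D.RI i ↔ S.s (i - 1) - (S.l - D.lo i) + 1 ≤ w ∧ w ≤ S.s (i - 1) := by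
  rw [RI, if_pos ho, Finset.mem_Icc]

theorem mem_RI_of_even (he : Even i) :
    w ∈ D.RI i ↔ S.s (i - 1) ≤ w ∧ w ≤ S.s (i - 1) + (S.l - D.lo i) - 1 := by
  rw [RI, if_neg (Int.not_odd_iff_even.2 he), Finset.mem_Icc]

theorem xiLo_of_odd (ho : Odd i) : D.xiLo i = S.s (i - 1) - (S.l - D.lo i) + 1 := by
  rw [xiLo, if_pos ho]

theorem xiLo_of_even (he : Even i) : D.xiLo i = S.s (i - 1) := by
  rw [xiLo, if_neg (Int.not_odd_iff_even.2 he)]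

theorem xiHi_of_odd (ho : Odd i) : D.xiHi i = S.s i + D.hi i - 1 := by
  rw [xiHi, if_neg (Int.not_even_iff_odd.2 ho)]

theorem xiHi_of_even (he : Even i) : D.xiHi i = S.s i := by
  rw [xiHi, if_pos he]

theorem mem_Xi_sub {a b : ℤ} : w ∈ D.Xi a (b - a) ↔ D.xiLo a ≤ w ∧ w ≤ D.xiHi b := by
  rw [Xi, add_sub_cancel, Finset.mem_Icc]

theorem BI_of_eq_empty (h : D.X i = ∅) : D.BI i = ∅ := by
  have := D.hi_of_eq_empty h
  unfold BI
  split_ifs <;> exact Finset.Icc_eq_empty (by omega)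

theorem RI_of_eq_empty (h : D.X i = ∅) : D.RI i = ∅ := by
  have := D.lo_of_eq_empty h
  unfold RI
  split_ifs <;> exact Finset.Icc_eq_empty (by omega)

theorem mem_BigB : w ∈ D.BigB ↔ ∃ i, 2 ≤ i ∧ i ≤ S.p ∧ w ∈ D.BI i := by
  simp [BigB, and_assoc]

theorem mem_BigR : w ∈ D.BigR ↔ ∃ i, 2 ≤ i ∧ i ≤ S.p ∧ w ∈ D.RI i := by
  simp [BigR, and_assoc]

theorem xiLo_le_s (h : (D.X i).Nonempty) :
    D.xiLo i ≤ S.s (i - 1) ∧ S.s (i - 1) - S.l + 2 ≤ D.xiLo i := by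
  have := D.one_le_lo i
  have := D.lo_le_hi h
  have := D.hi_le i
  rcases Int.even_or_odd i with he | ho
  · rw [D.xiLo_of_even he]; omega
  · rw [D.xiLo_of_odd ho]; omega

theorem s_le_xiHi (h : (D.X i).Nonempty) : S.s i ≤ D.xiHi i ∧ D.xiHi i ≤ S.s i + S.l - 2 := by
  have := D.one_le_lo i
  have := D.lo_le_hi h
  have := D.hi_le i
  rcases Int.even_or_odd i with he | ho
  · rw [D.xiHi_of_even he]; omega
  · rw [D.xiHi_of_odd ho]; omega

theorem mem_RI_iff_xiLo : w ∈ D.RI i ↔ D.xiLo i ≤ w ∧ w ≤ D.xiLo i + (S.l - D.lo i) - 1 := by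
  rcases Int.even_or_odd i with he | ho
  · rw [D.mem_RI_of_even he, D.xiLo_of_even he]
  · rw [D.mem_RI_of_odd ho, D.xiLo_of_odd ho]
    omega

theorem mem_BI_iff_xiHi : w ∈ D.BI i ↔ D.xiHi i - D.hi i + 1 ≤ w ∧ w ≤ D.xiHi i := by
  rcases Int.even_or_odd i with he | ho
  · rw [D.mem_BI_of_even he, D.xiHi_of_even he]
  · rw [D.mem_BI_of_odd ho, D.xiHi_of_odd ho]
    omega

end Basic

variable {D : CDatum S} {I : Finset ℤ} {a b a' b' i j k u w x : ℤ}

theorem IsSupport.notMem_R (h : D.IsSupport I) (hw : w ∈ I) : w ∉ D.R := fun hR => by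
  simpa using Finset.ext_iff.1 h.1 w |>.1 (Finset.mem_inter.2 ⟨hR, hw⟩)

theorem IsSupport.mem_B_iff (h : D.IsSupport I) (hw : w ∈ I) : w ∈ D.B ↔ w ∉ D.BigB := by
  simpa [hw] using Finset.ext_iff.1 h.2 w

theorem IsRigidI.notMem_B (h : D.IsRigidI I) (hw : w ∈ I) : w ∉ D.B := fun hB => by
  simpa using Finset.ext_iff.1 h.1 w |>.1 (Finset.mem_inter.2 ⟨hB, hw⟩)

theorem IsRigidI.mem_R_iff (h : D.IsRigidI I) (hw : w ∈ I) : w ∈ D.R ↔ w ∉ D.BigR := by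
  simpa [hw] using Finset.ext_iff.1 h.2 w

theorem IsSuppToRigid.mem_B_iff (h : D.IsSuppToRigid I x) (hw : w ∈ I) : w ∈ D.B ↔ w ≤ x := by
  simpa [hw] using Finset.ext_iff.1 h.2.1 w

theorem IsSuppToRigid.mem_R_iff (h : D.IsSuppToRigid I x) (hw : w ∈ I) :
    w ∈ D.R ↔ x + S.l ≤ w := by
  simpa [hw] using Finset.ext_iff.1 h.2.2.2.1 w

theorem IsRigidToSupp.mem_B_iff (h : D.IsRigidToSupp I x) (hw : w ∈ I) :
    w ∈ D.B ↔ x + 1 ≤ w := by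
  simpa [hw] using Finset.ext_iff.1 h.2.2.2.1 w

namespace IsBlock

theorem two_le (h : D.IsBlock a b) : 2 ≤ a := h.1

theorem le_p (h : D.IsBlock a b) : b ≤ S.p := h.2.1

theorem le (h : D.IsBlock a b) : a ≤ b := h.2.2.1

theorem nonempty (h : D.IsBlock a b) (haj : a ≤ j) (hjb : j ≤ b) : (D.X j).Nonempty :=
  h.2.2.2.1 j haj hjb

theorem X_sub_one (h : D.IsBlock a b) : D.X (a - 1) = ∅ := h.2.2.2.2.1

theorem X_add_one (h : D.IsBlock a b) : D.X (b + 1) = ∅ := h.2.2.2.2.2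

theorem eq_or_lt_or_lt (h : D.IsBlock a b) (h' : D.IsBlock a' b') :
    (a = a' ∧ b = b') ∨ b < a' ∨ b' < a := by
  have := h.le
  have := h'.le
  have hne : ∀ {k}, D.X k = ∅ → ¬ (D.X k).Nonempty := fun hk => by simp [hk]
  by_contra! hc
  obtain ⟨hab, hba', hb'a⟩ := hc
  rcases lt_trichotomy a a' with hlt | rfl | hlt
  · exact hne h'.X_sub_one (h.nonempty (j := a' - 1) (by omega) (by omega))
  · rcases lt_trichotomy b b' with hlt | rfl | hlt
    · exact hne h.X_add_one (h'.nonempty (j := b + 1) (by omega) (by omega))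
    · exact hab rfl rfl
    · exact hne h'.X_add_one (h.nonempty (j := b' + 1) (by omega) (by omega))
  · exact hne h.X_sub_one (h'.nonempty (j := a - 1) (by omega) (by omega))

end IsBlock

theorem exists_isBlock (h : (D.X i).Nonempty) : ∃ a b, D.IsBlock a b ∧ a ≤ i ∧ i ≤ b := by
  obtain ⟨a, b, hai, hib, hrun, ha, hb⟩ :=
    Int.exists_maximal_run h fun j hj => D.mem_Icc_of_nonempty hj
  refine ⟨a, b, ⟨(D.mem_Icc_of_nonempty (hrun a le_rfl (by omega))).1,
    (D.mem_Icc_of_nonempty (hrun b (by omega) le_rfl)).2, by omega, hrun, ?_, ?_⟩, hai, hib⟩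
  · exact Finset.not_nonempty_iff_eq_empty.1 ha
  · exact Finset.not_nonempty_iff_eq_empty.1 hb

theorem exists_isBlock_above {c : ℤ} (hc : D.X c = ∅) (hne : ∃ j, c < j ∧ (D.X j).Nonempty) :
    ∃ a b, D.IsBlock a b ∧ c < a ∧ ∀ j, c < j → j < a → D.X j = ∅ := by
  obtain ⟨j₀, ⟨hcj₀, hj₀⟩, hmin⟩ := Int.exists_least_of_bdd
    (P := fun j => c < j ∧ (D.X j).Nonempty) ⟨c, fun j hj => hj.1.le⟩ hne
  obtain ⟨a, b, hb, haj, hjb⟩ := exists_isBlock hj₀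
  have hca : c < a := by
    by_contra!
    simpa [hc] using hb.nonempty (j := c) this (by omega)
  refine ⟨a, b, hb, hca, fun j hcj hja => ?_⟩
  by_contra hj
  have := hmin j ⟨hcj, Finset.nonempty_iff_ne_empty.2 hj⟩
  omega

theorem exists_firstBlock (hT : D.T.Nonempty) : ∃ a b, D.FirstBlock a b := by
  obtain ⟨j, hj⟩ := hT
  simp only [T, Finset.mem_filter, Finset.mem_Icc] at hj
  obtain ⟨a, b, hb, -, hbelow⟩ :=
    exists_isBlock_above (D.hXout 1 (by omega)) ⟨j, by omega, hj.2⟩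
  refine ⟨a, b, hb, fun k hk => ?_⟩
  by_cases h1 : 1 < k
  · exact hbelow k h1 hk
  · exact D.hXout k (by omega)

theorem IsBlock.lastBlock_or_consecBlocks (hb : D.IsBlock a b) :
    D.LastBlock a b ∨ ∃ a' b', D.ConsecBlocks a b a' b' := by
  by_cases hne : ∃ j, b + 1 < j ∧ (D.X j).Nonempty
  · obtain ⟨a', b', hb', hlt, hbetween⟩ := exists_isBlock_above hb.X_add_one hne
    refine Or.inr ⟨a', b', hb, hb', by omega, fun j hbj hja' => ?_⟩
    rcases eq_or_lt_of_le (show b + 1 ≤ j by omega) with rfl | h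
    exacts [hb.X_add_one, hbetween j h hja']
  · push Not at hne
    refine Or.inl ⟨hb, fun j hj => ?_⟩
    rcases eq_or_lt_of_le (show b + 1 ≤ j by omega) with rfl | h
    exacts [hb.X_add_one, hne j h]

/-- Conditions (i)–(v) of well-configuredness; when `T = ∅` there are no blocks and they hold
vacuously. -/
structure BlockConditions (D : CDatum S) : Prop where
  admissible_full : ∀ a b, D.IsBlock a b → D.Admissible a (b - a) ∧ D.Full a (b - a)
  xi_disjoint : ∀ a b a' b', D.ConsecBlocks a b a' b' →
    D.Xi a (b - a) ∩ D.Xi a' (b' - a') = ∅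
  goodTheta_first : ∀ a b, D.FirstBlock a b → D.GoodTheta (Finset.Icc 1 (D.xiLo a - 1))
  goodTheta_between : ∀ a b a' b', D.ConsecBlocks a b a' b' →
    D.GoodTheta (Finset.Icc (D.xiHi b + 1) (D.xiLo a' - 1))
  goodTheta_last : ∀ a b, D.LastBlock a b → D.GoodTheta (Finset.Icc (D.xiHi b + 1) S.n)
  rigid_first : ∀ a b, D.FirstBlock a b → D.IsRigidI (D.Xi a (b - a)) →
    D.IsRigidI (Finset.Icc 1 (D.xiLo a - 1)) ∨ D.FullType3 a b
  rigid_between : ∀ a b a' b', D.ConsecBlocks a b a' b' → D.IsRigidI (D.Xi a' (b' - a')) →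
    D.IsRigidI (Finset.Icc (D.xiHi b + 1) (D.xiLo a' - 1)) ∨ D.FullType3 a' b'
  support_between : ∀ a b a' b', D.ConsecBlocks a b a' b' → D.IsSupport (D.Xi a (b - a)) →
    D.IsSupport (Finset.Icc (D.xiHi b + 1) (D.xiLo a' - 1)) ∨ D.FullType3 a b
  support_last : ∀ a b, D.LastBlock a b → D.IsSupport (D.Xi a (b - a)) →
    D.IsSupport (Finset.Icc (D.xiHi b + 1) S.n) ∨ D.FullType3 a b

theorem not_isBlock_of_T_eq_empty (hT : D.T = ∅) : ¬ D.IsBlock a b := fun hb => by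
  have : a ∈ D.T := by
    simp only [T, Finset.mem_filter, Finset.mem_Icc]
    exact ⟨⟨hb.two_le, hb.le.trans hb.le_p⟩, hb.nonempty le_rfl hb.le⟩
  simp [hT] at this

theorem WellConfigured.blockConditions (h : D.WellConfigured) : D.BlockConditions := by
  rcases h with ⟨hT, -⟩ | ⟨-, h₁, h₂, h₃, h₄, h₅, h₆, h₇, h₈, h₉⟩
  · have hno : ∀ {a b : ℤ}, ¬ D.IsBlock a b := not_isBlock_of_T_eq_empty hT
    constructor <;> intros <;> simp_all [FirstBlock, LastBlock, ConsecBlocks]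
  · exact ⟨h₁, h₂, h₃, h₄, h₅, h₆, h₇, h₈, h₉⟩

theorem IsBlock.xiLo_le_xiHi (hb : D.IsBlock a b) : D.xiLo a ≤ D.xiHi b := by
  have := S.s_add_two_mul_le (i := a - 1) (j := b) (by linarith [hb.two_le]) (by linarith [hb.le])
    hb.le_p
  linarith [(D.xiLo_le_s (hb.nonempty le_rfl hb.le)).1, (D.s_le_xiHi (hb.nonempty hb.le le_rfl)).1,
    hb.le]

theorem s_sub_one_add_two_le_of_mem_BI (h2 : 2 ≤ i) (hp : i ≤ S.p) (hw : w ∈ D.BI i) :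
    S.s (i - 1) + 2 ≤ w := by
  have := D.hi_le i
  rcases Int.even_or_odd i with he | ho
  · rw [D.mem_BI_of_even he] at hw
    linarith [S.s_sub_one_add_l_le_of_even h2 hp he]
  · rw [D.mem_BI_of_odd ho] at hw
    linarith [S.s_sub_one_add_two_le h2 hp]

theorem IsBlock.mem_Xi_of_mem_BI (hb : D.IsBlock a b) (hai : a ≤ i) (hib : i ≤ b)
    (hw : w ∈ D.BI i) : w ∈ D.Xi a (b - a) := by
  have h2 := hb.two_le
  have hbp := hb.le_p
  have := (D.xiLo_le_s (hb.nonempty le_rfl hb.le)).1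
  have := (D.s_le_xiHi (hb.nonempty hb.le le_rfl)).1
  have := D.s_sub_one_add_two_le_of_mem_BI (by omega) (by omega) hw
  have := S.s_add_two_mul_le (i := a - 1) (j := i - 1) (by omega) (by omega) (by omega)
  have := S.s_add_two_mul_le (i := i) (j := b) (by omega) hib hbp
  have := D.hi_le i
  rw [mem_Xi_sub]
  rcases Int.even_or_odd i with he | ho
  · rw [D.mem_BI_of_even he] at hw
    omega
  · rw [D.mem_BI_of_odd ho] at hw
    rcases eq_or_lt_of_le hib with rfl | hlt
    · rw [D.xiHi_of_odd ho]
      omega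
    · have := S.s_add_l_le_of_odd (by omega) ho hlt hbp
      omega

theorem IsBlock.mem_Xi_of_mem_RI (hb : D.IsBlock a b) (hai : a ≤ i) (hib : i ≤ b)
    (hw : w ∈ D.RI i) : w ∈ D.Xi a (b - a) := by
  have h2 := hb.two_le
  have hbp := hb.le_p
  have := (D.xiLo_le_s (hb.nonempty le_rfl hb.le)).1
  have := (D.s_le_xiHi (hb.nonempty hb.le le_rfl)).1
  have := D.one_le_lo i
  have := S.s_add_two_mul_le (i := a - 1) (j := i - 1) (by omega) (by omega) (by omega)
  have := S.s_add_two_mul_le (i := i - 1) (j := b) (by omega) (by omega) hbp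
  rw [mem_Xi_sub]
  rcases Int.even_or_odd i with he | ho
  · rw [D.mem_RI_of_even he] at hw
    rcases eq_or_lt_of_le hib with rfl | hlt
    · rw [D.xiHi_of_even he]
      have := S.s_sub_one_add_l_le_of_even (i := i) (by omega) (by omega) he
      omega
    · have := S.s_add_l_add_two_le (i := i - 1) (j := b) (by omega) (by omega) hbp
      omega
  · rw [D.mem_RI_of_odd ho] at hw
    rcases eq_or_lt_of_le hai with rfl | hlt
    · rw [D.xiLo_of_odd ho]
      omega
    · rcases Int.even_or_odd a with hea | hoa
      · have := S.s_sub_one_add_l_le_of_even (i := a) (by omega) (by omega) hea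
        have := S.s_add_two_mul_le (i := a) (j := i - 1) (by omega) (by omega) (by omega)
        omega
      · have : a + 2 ≤ i := by
          obtain ⟨t, rfl⟩ := hoa
          obtain ⟨t', rfl⟩ := ho
          omega
        have := S.s_add_l_add_two_le (i := a - 1) (j := i - 1) (by omega) (by omega) (by omega)
        omega

theorem exists_BI_of_mem_BigB (hw : w ∈ D.BigB) :
    ∃ a b i, D.IsBlock a b ∧ a ≤ i ∧ i ≤ b ∧ w ∈ D.BI i := by
  obtain ⟨i, -, -, hwi⟩ := D.mem_BigB.1 hw
  have hne : (D.X i).Nonempty := by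
    by_contra h
    simp [D.BI_of_eq_empty (Finset.not_nonempty_iff_eq_empty.1 h)] at hwi
  obtain ⟨a, b, hb, hai, hib⟩ := exists_isBlock hne
  exact ⟨a, b, i, hb, hai, hib, hwi⟩

theorem ConsecBlocks.add_two_le (hcb : D.ConsecBlocks a b a' b') : b + 2 ≤ a' := by
  have hXa' := hcb.2.1.nonempty le_rfl hcb.2.1.le
  rcases eq_or_lt_of_le (show b + 1 ≤ a' by linarith [hcb.2.2.1]) with rfl | h
  · simp [hcb.1.X_add_one] at hXa'
  · omega

theorem ConsecBlocks.odd_of_xiHi_add_one_eq_xiLo (hcb : D.ConsecBlocks a b a' b')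
    (heq : D.xiHi b + 1 = D.xiLo a') : Odd b ∧ Odd a' := by
  have := hcb.add_two_le
  obtain ⟨hb, hb', -, -⟩ := hcb
  have := hb.two_le
  have := hb.le
  have := hb'.le
  have := hb'.le_p
  have := D.hi_le b
  have := D.one_le_lo a'
  have := S.s_add_two_mul_le (i := b) (j := a' - 1) (by omega) (by omega) (by omega)
  rcases Int.even_or_odd b with heb | hob
  · exfalso
    rw [D.xiHi_of_even heb] at heq
    rcases Int.even_or_odd a' with hea | hoa
    · rw [D.xiLo_of_even hea] at heq
      omega
    · have : b + 2 ≤ a' - 1 := by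
        obtain ⟨t, rfl⟩ := heb
        obtain ⟨t', rfl⟩ := hoa
        omega
      have := S.s_add_l_add_two_le (i := b) (j := a' - 1) (by omega) this (by omega)
      rw [D.xiLo_of_odd hoa] at heq
      omega
  · refine ⟨hob, (Int.even_or_odd a').resolve_left fun hea => ?_⟩
    have := S.s_add_l_le_of_odd (i := b) (j := a' - 1) (by omega) hob (by omega) (by omega)
    rw [D.xiHi_of_odd hob, D.xiLo_of_even hea] at heq
    omega

theorem IsBlock.free_of_mem_BI (hb : D.IsBlock a b) (hsup : D.IsSupport (D.Xi a (b - a)))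
    (hai : a ≤ i) (hib : i ≤ b) (hw : w ∈ D.BI i) : w ∉ D.R ∧ w ∉ D.B :=
  have hwXi := hb.mem_Xi_of_mem_BI hai hib hw
  ⟨hsup.notMem_R hwXi, fun hB => (hsup.mem_B_iff hwXi).1 hB
    (D.mem_BigB.2 ⟨i, by linarith [hb.two_le], by linarith [hb.le_p], hw⟩)⟩

namespace BlockConditions

variable (hC : D.BlockConditions)
include hC

theorem xiHi_lt_xiLo_of_consecBlocks (hcb : D.ConsecBlocks a b a' b') :
    D.xiHi b < D.xiLo a' := by
  have := hcb.add_two_le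
  obtain ⟨hb, hb', hlt, hgap⟩ := hcb
  have hXa' := hb'.nonempty le_rfl hb'.le
  have := S.s_add_l_add_two_le (i := a - 1) (j := a' - 1) (by linarith [hb.two_le])
    (by linarith [hb.le]) (by linarith [hb'.le_p, hb'.le])
  have := (D.xiLo_le_s (hb.nonempty le_rfl hb.le)).1
  have := (D.xiLo_le_s hXa').2
  by_contra! hle
  have hmem : D.xiLo a' ∈ D.Xi a (b - a) ∩ D.Xi a' (b' - a') := by
    rw [Finset.mem_inter, mem_Xi_sub, mem_Xi_sub]
    exact ⟨⟨by omega, hle⟩, le_rfl, hb'.xiLo_le_xiHi⟩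
  simp [hC.xi_disjoint a b a' b' ⟨hb, hb', hlt, hgap⟩] at hmem

theorem xiHi_lt_xiLo (hb : D.IsBlock a b) (hb' : D.IsBlock a' b') (hlt : b < a') :
    D.xiHi b < D.xiLo a' := by
  induction hn : (a' - b).toNat using Nat.strong_induction_on generalizing a b a' b' with
  | _ n ih =>
    by_cases hgap : ∀ j, b < j → j < a' → D.X j = ∅
    · exact hC.xiHi_lt_xiLo_of_consecBlocks ⟨hb, hb', hlt, hgap⟩
    · push Not at hgap
      obtain ⟨j, hbj, hja', hj⟩ := hgap
      obtain ⟨a₂, b₂, hb₂, haj, hjb⟩ := exists_isBlock hj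
      have := hb.le
      have := hb'.le
      have hba₂ : b < a₂ := by
        rcases hb.eq_or_lt_or_lt hb₂ with ⟨-, rfl⟩ | h | h <;> omega
      have hb₂a' : b₂ < a' := by
        rcases hb₂.eq_or_lt_or_lt hb' with ⟨rfl, -⟩ | h | h <;> omega
      have := ih _ (by omega) hb hb₂ hba₂ rfl
      have := ih _ (by omega) hb₂ hb' hb₂a' rfl
      linarith [hb₂.xiLo_le_xiHi]

theorem exists_BI_of_mem_BigB_of_mem_Xi (hb : D.IsBlock a b) (hw : w ∈ D.BigB)
    (hwXi : w ∈ D.Xi a (b - a)) : ∃ i, a ≤ i ∧ i ≤ b ∧ w ∈ D.BI i := by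
  obtain ⟨a₂, b₂, i, hb₂, hai, hib, hwi⟩ := exists_BI_of_mem_BigB hw
  have hwXi₂ := D.mem_Xi_sub.1 (hb₂.mem_Xi_of_mem_BI hai hib hwi)
  rw [mem_Xi_sub] at hwXi
  rcases hb.eq_or_lt_or_lt hb₂ with ⟨rfl, rfl⟩ | h | h
  · exact ⟨i, hai, hib, hwi⟩
  · linarith [hC.xiHi_lt_xiLo hb hb₂ h]
  · linarith [hC.xiHi_lt_xiLo hb₂ hb h]

theorem notMem_BigB_of_lt_xiLo (hfb : D.FirstBlock a b) (hw : w < D.xiLo a) : w ∉ D.BigB := by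
  intro hwB
  obtain ⟨a₂, b₂, i, hb₂, hai, hib, hwi⟩ := exists_BI_of_mem_BigB hwB
  have hwXi₂ := D.mem_Xi_sub.1 (hb₂.mem_Xi_of_mem_BI hai hib hwi)
  rcases hfb.1.eq_or_lt_or_lt hb₂ with ⟨rfl, rfl⟩ | h | h
  · omega
  · linarith [hC.xiHi_lt_xiLo hfb.1 hb₂ h, hfb.1.xiLo_le_xiHi]
  · simpa [hfb.2 a₂ (by linarith [hb₂.le])] using hb₂.nonempty le_rfl hb₂.le

theorem notMem_BigB_of_between (hcb : D.ConsecBlocks a b a' b') (h₁ : D.xiHi b < w)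
    (h₂ : w < D.xiLo a') : w ∉ D.BigB := by
  intro hwB
  obtain ⟨a₂, b₂, i, hb₂, hai, hib, hwi⟩ := exists_BI_of_mem_BigB hwB
  have hwXi₂ := D.mem_Xi_sub.1 (hb₂.mem_Xi_of_mem_BI hai hib hwi)
  obtain ⟨hb, hb', hlt, hgap⟩ := hcb
  rcases hb.eq_or_lt_or_lt hb₂ with ⟨rfl, rfl⟩ | h | h
  · omega
  · rcases hb₂.eq_or_lt_or_lt hb' with ⟨rfl, rfl⟩ | h' | h'
    · omega
    · simpa [hgap a₂ h (by linarith [hb₂.le])] using hb₂.nonempty le_rfl hb₂.le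
    · linarith [hC.xiHi_lt_xiLo hb' hb₂ h', hb'.xiLo_le_xiHi]
  · linarith [hC.xiHi_lt_xiLo hb₂ hb h, hb.xiLo_le_xiHi]

theorem notMem_BigB_of_xiHi_lt (hlb : D.LastBlock a b) (hw : D.xiHi b < w) : w ∉ D.BigB := by
  intro hwB
  obtain ⟨a₂, b₂, i, hb₂, hai, hib, hwi⟩ := exists_BI_of_mem_BigB hwB
  have hwXi₂ := D.mem_Xi_sub.1 (hb₂.mem_Xi_of_mem_BI hai hib hwi)
  rcases hlb.1.eq_or_lt_or_lt hb₂ with ⟨rfl, rfl⟩ | h | h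
  · omega
  · simpa [hlb.2 a₂ h] using hb₂.nonempty le_rfl hb₂.le
  · linarith [hC.xiHi_lt_xiLo hb₂ hlb.1 h, hlb.1.xiLo_le_xiHi]

end BlockConditions

theorem Admissible.status (h : D.Admissible a k) :
    D.IsSupport (D.Xi a k) ∨ D.IsRigidI (D.Xi a k) ∨ ∃ x, D.IsSuppToRigid (D.Xi a k) x := by
  obtain ⟨-, -, -, -, hty⟩ := h
  rcases hty with ⟨-, -, -, h⟩ | ⟨-, -, -, h⟩ | ⟨-, -, -, h | h | ⟨x, -, h⟩⟩ | ⟨-, -, -, -, -, h⟩ |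
    ⟨-, -, -, -, -, h⟩ | ⟨-, -, -, -, -, h | ⟨x, -, h⟩⟩ | ⟨-, -, -, -, -, h | ⟨x, -, h⟩⟩ |
    ⟨-, -, -, -, -, -, -, x, -, h⟩
  all_goals first
    | exact Or.inl h
    | exact Or.inr (Or.inl h)
    | exact Or.inr (Or.inr ⟨_, h⟩)

theorem Admissible.le_two (h : D.Admissible a k) : k ≤ 2 := by
  obtain ⟨-, -, -, -, hty⟩ := h
  rcases hty with ⟨h, -⟩ | ⟨h, -⟩ | ⟨h, -⟩ | ⟨h, -⟩ | ⟨h, -⟩ | ⟨h, -⟩ | ⟨h, -⟩ | ⟨h, -⟩ <;> omega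

theorem BlockConditions.m_eq (hC : D.BlockConditions) (hb : D.IsBlock a b) (hai : a ≤ i)
    (hib : i ≤ b) : D.m i = D.hi i - D.lo i + 1 := by
  simpa using (hC.admissible_full a b hb).2 (i - a) (by omega) (by omega)

theorem exists_isBlock_of_nonempty_add_one (hj : (D.X j).Nonempty) (hj' : (D.X (j + 1)).Nonempty) :
    ∃ a b, D.IsBlock a b ∧ a ≤ j ∧ j + 1 ≤ b := by
  obtain ⟨a, b, hb, haj, hjb⟩ := exists_isBlock hj
  refine ⟨a, b, hb, haj, ?_⟩
  rcases eq_or_lt_of_le hjb with rfl | h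
  · simp [hb.X_add_one] at hj'
  · exact h

theorem inter_RI_BI_eq_empty_of_support (hs : D.IsSupport I) (hR : D.RI i ⊆ I)
    (hB : D.BI i ⊆ I) (h2 : 2 ≤ i) (hp : i ≤ S.p) : D.R ∩ D.RI i = ∅ ∧ D.B ∩ D.BI i = ∅ := by
  refine ⟨Finset.disjoint_iff_inter_eq_empty.1 (Finset.disjoint_right.2 fun w hw =>
    hs.notMem_R (hR hw)), Finset.disjoint_iff_inter_eq_empty.1 (Finset.disjoint_right.2
    fun w hw => ?_)⟩
  rw [hs.mem_B_iff (hB hw), not_not]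
  exact D.mem_BigB.2 ⟨i, h2, hp, hw⟩

theorem inter_RI_BI_eq_empty_of_rigid (hs : D.IsRigidI I) (hR : D.RI i ⊆ I)
    (hB : D.BI i ⊆ I) (h2 : 2 ≤ i) (hp : i ≤ S.p) : D.R ∩ D.RI i = ∅ ∧ D.B ∩ D.BI i = ∅ := by
  refine ⟨Finset.disjoint_iff_inter_eq_empty.1 (Finset.disjoint_right.2 fun w hw => ?_),
    Finset.disjoint_iff_inter_eq_empty.1 (Finset.disjoint_right.2 fun w hw =>
    hs.notMem_B (hB hw))⟩
  rw [hs.mem_R_iff (hR hw), not_not]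
  exact D.mem_BigR.2 ⟨i, h2, hp, hw⟩

theorem inter_RI_BI_eq_empty_of_suppToRigid (hs : D.IsSuppToRigid I x) (hR : D.RI i ⊆ I)
    (hB : D.BI i ⊆ I) (hRx : ∀ w ∈ D.RI i, w < x + S.l) (hBx : ∀ w ∈ D.BI i, x < w) :
    D.R ∩ D.RI i = ∅ ∧ D.B ∩ D.BI i = ∅ := by
  refine ⟨Finset.disjoint_iff_inter_eq_empty.1 (Finset.disjoint_right.2 fun w hw => ?_),
    Finset.disjoint_iff_inter_eq_empty.1 (Finset.disjoint_right.2 fun w hw => ?_)⟩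
  · rw [hs.mem_R_iff (hR hw)]
    linarith [hRx w hw]
  · rw [hs.mem_B_iff (hB hw)]
    linarith [hBx w hw]

theorem bounds_of_typeIII (hlo : D.lo i = 1) (hx : D.xiLo i ≤ x ∧ x ≤ D.xiHi i)
    (hxB : x ∉ D.BI i) : (∀ w ∈ D.RI i, w < x + S.l) ∧ ∀ w ∈ D.BI i, x < w := by
  refine ⟨fun w hw => ?_, fun w hw => ?_⟩
  · rw [mem_RI_iff_xiLo] at hw
    omega
  · rw [mem_BI_iff_xiHi] at hw hxB
    omega

theorem bounds_of_typeVI (h2 : 2 ≤ a) (hp : a + 1 ≤ S.p) (ho : Odd a)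
    (hhi : D.hi (a + 1) = S.l - 1) (hm : D.m (a + 1) = D.hi (a + 1) - D.lo (a + 1) + 1)
    (hx : x ∈ Finset.Icc (S.s a - (S.l - D.m (a + 1))) (S.s a - 1)) (hai : a ≤ i)
    (hib : i ≤ a + 1) : (∀ w ∈ D.RI i, w < x + S.l) ∧ ∀ w ∈ D.BI i, x < w := by
  rw [Finset.mem_Icc] at hx
  have := S.s_sub_one_add_two_le h2 (by omega)
  have := S.s_sub_one_add_l_le_of_even (i := a + 1) (by omega) hp ho.add_one
  rw [add_sub_cancel_right] at this
  have := D.hi_le a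
  have := D.lo_le (a + 1)
  obtain rfl | rfl : i = a ∨ i = a + 1 := by omega
  · refine ⟨fun w hw => ?_, fun w hw => ?_⟩
    · rw [D.mem_RI_of_odd ho] at hw
      omega
    · rw [D.mem_BI_of_odd ho] at hw
      omega
  · refine ⟨fun w hw => ?_, fun w hw => ?_⟩
    · rw [D.mem_RI_of_even ho.add_one, add_sub_cancel_right] at hw
      omega
    · rw [D.mem_BI_of_even ho.add_one] at hw
      omega

theorem bounds_of_typeVII (h2 : 2 ≤ a) (hp : a + 1 ≤ S.p) (he : Even a) (hlo : D.lo a = 1)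
    (hm : D.m a = D.hi a - D.lo a + 1) (hx : x ∈ Finset.Icc (S.s a - (S.l - 1)) (S.s a - D.m a))
    (hai : a ≤ i) (hib : i ≤ a + 1) : (∀ w ∈ D.RI i, w < x + S.l) ∧ ∀ w ∈ D.BI i, x < w := by
  rw [Finset.mem_Icc] at hx
  have := S.s_sub_one_add_l_le_of_even h2 (by omega) he
  have := S.s_sub_one_add_two_le (i := a + 1) (by omega) hp
  rw [add_sub_cancel_right] at this
  have := D.hi_le (a + 1)
  have := D.hi_nonneg a
  obtain rfl | rfl : i = a ∨ i = a + 1 := by omega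
  · refine ⟨fun w hw => ?_, fun w hw => ?_⟩
    · rw [D.mem_RI_of_even he] at hw
      omega
    · rw [D.mem_BI_of_even he] at hw
      omega
  · refine ⟨fun w hw => ?_, fun w hw => ?_⟩
    · rw [D.mem_RI_of_odd he.add_one, add_sub_cancel_right] at hw
      omega
    · rw [D.mem_BI_of_odd he.add_one] at hw
      omega

theorem bounds_of_typeVIII (h2 : 2 ≤ a) (hp : a + 2 ≤ S.p) (hd : S.d = 2) (he : Even a)
    (hx : x ∈ Finset.Icc (S.s (a + 1) - D.lo (a + 2)) (S.s a - D.hi a)) (hai : a ≤ i)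
    (hib : i ≤ a + 2) : (∀ w ∈ D.RI i, w < x + S.l) ∧ ∀ w ∈ D.BI i, x < w := by
  rw [Finset.mem_Icc] at hx
  have he2 : Even (a + 2) := by simpa [parity_simps] using he
  have := S.s_sub_one_add_l_le_of_even h2 (by omega) he
  have := S.s_eq_of_odd_of_d_eq_two hd (i := a + 1) (by omega) (by omega) he.add_one
  have := S.s_eq_of_even_of_d_eq_two hd (i := a + 2) (by omega) hp he2
  rw [add_sub_cancel_right] at *
  rw [show a + 2 - 1 = a + 1 by ring] at *
  have := D.hi_le a
  have := D.hi_le (a + 1)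
  have := D.hi_le (a + 2)
  have := D.hi_nonneg a
  have := D.one_le_lo a
  have := D.lo_le (a + 2)
  obtain rfl | rfl | rfl : i = a ∨ i = a + 1 ∨ i = a + 2 := by omega
  · refine ⟨fun w hw => ?_, fun w hw => ?_⟩
    · rw [D.mem_RI_of_even he] at hw
      omega
    · rw [D.mem_BI_of_even he] at hw
      omega
  · refine ⟨fun w hw => ?_, fun w hw => ?_⟩
    · rw [D.mem_RI_of_odd he.add_one, add_sub_cancel_right] at hw
      omega
    · rw [D.mem_BI_of_odd he.add_one] at hw
      omega
  · refine ⟨fun w hw => ?_, fun w hw => ?_⟩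
    · rw [D.mem_RI_of_even he2, show a + 2 - 1 = a + 1 by ring] at hw
      omega
    · rw [D.mem_BI_of_even he2] at hw
      omega

namespace BlockConditions

variable (hC : D.BlockConditions)
include hC

theorem inter_RI_BI_eq_empty (h2 : 2 ≤ i) (hp : i ≤ S.p) :
    D.R ∩ D.RI i = ∅ ∧ D.B ∩ D.BI i = ∅ := by
  by_cases hne : (D.X i).Nonempty
  swap
  · have hX := Finset.not_nonempty_iff_eq_empty.1 hne
    simp [D.RI_of_eq_empty hX, D.BI_of_eq_empty hX]
  obtain ⟨a, b, hb, hai, hib⟩ := exists_isBlock hne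
  have hR : D.RI i ⊆ D.Xi a (b - a) := fun w => hb.mem_Xi_of_mem_RI hai hib
  have hB : D.BI i ⊆ D.Xi a (b - a) := fun w => hb.mem_Xi_of_mem_BI hai hib
  have hsupp := fun hs => inter_RI_BI_eq_empty_of_support hs hR hB h2 hp
  have hrig := fun hs => inter_RI_BI_eq_empty_of_rigid hs hR hB h2 hp
  have hs2r := fun {x} (hs : D.IsSuppToRigid _ x) => inter_RI_BI_eq_empty_of_suppToRigid hs hR hB
  have ha2 := hb.two_le
  have hbp := hb.le_p
  obtain ⟨-, -, -, -, hty⟩ := (hC.admissible_full a b hb).1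
  rcases hty with ⟨-, -, -, hs⟩ | ⟨-, -, -, hs⟩ | ⟨hk, hlo, -, hs | hs | ⟨x, hx, hs⟩⟩ |
    ⟨-, -, -, -, -, hs⟩ | ⟨-, -, -, -, -, hs⟩ | ⟨hk, ho, -, hhi, -, hs | ⟨x, hx, hs⟩⟩ |
    ⟨hk, he, hlo, -, -, hs | ⟨x, hx, hs⟩⟩ | ⟨hk, hd, he, -, -, -, -, x, hx, hs⟩
  · exact hsupp hs
  · exact hrig hs
  · exact hsupp hs
  · exact hrig hs
  · obtain rfl : b = a := by omega
    obtain rfl : i = b := by omega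
    rw [Finset.mem_sdiff, D.mem_Xi_sub] at hx
    have := bounds_of_typeIII hlo hx.1 hx.2
    exact hs2r hs this.1 this.2
  · exact hrig hs
  · exact hsupp hs
  · exact hrig hs
  · obtain rfl : b = a + 1 := by omega
    have := bounds_of_typeVI ha2 hbp ho hhi (hC.m_eq hb (by omega) le_rfl) hx hai hib
    exact hs2r hs this.1 this.2
  · exact hsupp hs
  · obtain rfl : b = a + 1 := by omega
    have := bounds_of_typeVII ha2 hbp he hlo (hC.m_eq hb le_rfl (by omega)) hx hai hib
    exact hs2r hs this.1 this.2
  · obtain rfl : b = a + 2 := by omega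
    have := bounds_of_typeVIII ha2 hbp hd he hx hai hib
    exact hs2r hs this.1 this.2

theorem hi_add_hi_add_one_le (he : Even j) : D.hi j + D.hi (j + 1) ≤ S.l - 1 := by
  by_cases hne : (D.X j).Nonempty ∧ (D.X (j + 1)).Nonempty
  swap
  · rcases not_and_or.1 hne with h | h <;>
      rw [D.hi_of_eq_empty (Finset.not_nonempty_iff_eq_empty.1 h)] <;>
      linarith [D.hi_le j, D.hi_le (j + 1)]
  obtain ⟨a, b, hb, haj, hjb⟩ := exists_isBlock_of_nonempty_add_one hne.1 hne.2
  have := hC.m_eq hb haj (by omega)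
  have := hC.m_eq hb (by omega) hjb
  have hj := Int.even_iff.1 he
  obtain ⟨-, -, -, -, hty⟩ := (hC.admissible_full a b hb).1
  rcases hty with ⟨hk, -⟩ | ⟨hk, -⟩ | ⟨hk, -⟩ | ⟨hk, ha, -⟩ | ⟨hk, ha, hlo, hlo', hm, -⟩ |
    ⟨hk, ha, -⟩ | ⟨hk, ha, hlo, hlo', hm, -⟩ | ⟨hk, -, ha, -, -, hhi, -⟩
  · omega
  · omega
  · omega
  · have := Int.odd_iff.1 ha
    omega
  · obtain rfl : j = a := by have := Int.even_iff.1 ha; omega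
    omega
  · have := Int.odd_iff.1 ha
    omega
  · obtain rfl : j = a := by have := Int.even_iff.1 ha; omega
    omega
  · obtain rfl : j = a := by have := Int.even_iff.1 ha; omega
    omega

theorem l_add_one_le_lo_add_lo_add_one (ho : Odd j) : S.l + 1 ≤ D.lo j + D.lo (j + 1) := by
  by_cases hne : (D.X j).Nonempty ∧ (D.X (j + 1)).Nonempty
  swap
  · rcases not_and_or.1 hne with h | h <;>
      rw [D.lo_of_eq_empty (Finset.not_nonempty_iff_eq_empty.1 h)] <;>
      linarith [D.one_le_lo j, D.one_le_lo (j + 1)]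
  obtain ⟨a, b, hb, haj, hjb⟩ := exists_isBlock_of_nonempty_add_one hne.1 hne.2
  have := hC.m_eq hb haj (by omega)
  have := hC.m_eq hb (by omega) hjb
  have := D.lo_le_hi hne.1
  have := D.lo_le_hi hne.2
  have := D.hi_le j
  have := D.hi_le (j + 1)
  have hj := Int.odd_iff.1 ho
  obtain ⟨-, -, -, -, hty⟩ := (hC.admissible_full a b hb).1
  rcases hty with ⟨hk, -⟩ | ⟨hk, -⟩ | ⟨hk, -⟩ | ⟨hk, ha, hhi, hhi', hm, -⟩ | ⟨hk, ha, -⟩ |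
    ⟨hk, ha, hhi, hhi', hm, -⟩ | ⟨hk, ha, -⟩ | ⟨hk, -, ha, -, hlo, -⟩
  · omega
  · omega
  · omega
  · obtain rfl : j = a := by have := Int.odd_iff.1 ha; omega
    omega
  · have := Int.even_iff.1 ha
    omega
  · obtain rfl : j = a := by have := Int.odd_iff.1 ha; omega
    omega
  · have := Int.even_iff.1 ha
    omega
  · obtain rfl : j = a + 1 := by have := Int.even_iff.1 ha; omega
    rw [add_assoc, one_add_one_eq_two]
    omega

-- Three consecutive nonempty diagonals form a block of type (VIII), which starts at an even index.
theorem X_add_one_eq_empty_of_odd (ho : Odd j) (hj : (D.X j).Nonempty)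
    (hj' : (D.X (j + 2)).Nonempty) : D.X (j + 1) = ∅ := by
  by_contra h
  obtain ⟨a, b, hb, haj, hjb⟩ :=
    exists_isBlock_of_nonempty_add_one hj (Finset.nonempty_iff_ne_empty.2 h)
  have hb2 : j + 2 ≤ b := by
    rcases eq_or_lt_of_le hjb with rfl | h
    · have := hb.X_add_one
      rw [show j + 1 + 1 = j + 2 by ring] at this
      simp [this] at hj'
    · omega
  have hadm := (hC.admissible_full a b hb).1
  have := hadm.le_two
  obtain ⟨-, -, -, -, hty⟩ := hadm
  obtain rfl : a = j := by omega
  have := Int.odd_iff.1 ho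
  rcases hty with ⟨hk, -⟩ | ⟨hk, -⟩ | ⟨hk, -⟩ | ⟨hk, -⟩ | ⟨hk, -⟩ | ⟨hk, -⟩ | ⟨hk, -⟩ |
    ⟨-, -, ha, -⟩
  any_goals omega
  have := Int.even_iff.1 ha
  omega

theorem hi_le_lo_add_two_add_one (hd : S.d = 2) (ho : Odd j) : D.hi j ≤ D.lo (j + 2) + 1 := by
  by_cases hne : (D.X j).Nonempty ∧ (D.X (j + 2)).Nonempty
  swap
  · rcases not_and_or.1 hne with h | h
    · rw [D.hi_of_eq_empty (Finset.not_nonempty_iff_eq_empty.1 h)]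
      linarith [D.one_le_lo (j + 2)]
    · rw [D.lo_of_eq_empty (Finset.not_nonempty_iff_eq_empty.1 h)]
      linarith [D.hi_le j]
  obtain ⟨hj, hj'⟩ := hne
  have hj1 := hC.X_add_one_eq_empty_of_odd ho hj hj'
  obtain ⟨a, b, hb, haj, hjb⟩ := exists_isBlock hj
  obtain ⟨a', b', hb', haj', hjb'⟩ := exists_isBlock hj'
  obtain rfl : j = b := by
    rcases eq_or_lt_of_le hjb with h | h
    · exact h
    · simpa [hj1] using hb.nonempty (j := j + 1) (by omega) h
  obtain rfl : a' = j + 2 := by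
    rcases eq_or_lt_of_le haj' with h | h
    · exact h
    · simpa [hj1] using hb'.nonempty (j := j + 1) (by omega) (by omega)
  have hlt := hC.xiHi_lt_xiLo hb hb' (by omega)
  have ho2 : Odd (j + 2) := by simpa [parity_simps] using ho
  have := S.s_eq_of_even_of_d_eq_two hd (i := j + 1) (by linarith [hb.two_le])
    (by linarith [hb'.two_le, hb'.le, hb'.le_p]) ho.add_one
  rw [D.xiHi_of_odd ho, D.xiLo_of_odd ho2, show j + 2 - 1 = j + 1 by ring] at hlt
  rw [add_sub_cancel_right] at this
  omega

end BlockConditions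

theorem free_of_n_lt (hw : S.n < w) : w ∉ D.R ∧ w ∉ D.B :=
  ⟨fun h => by linarith [(Finset.mem_Icc.1 (D.hR h)).2],
    fun h => by linarith [(Finset.mem_Icc.1 (D.hB h)).2]⟩

theorem GoodTheta.add_one_mem_B (hg : D.GoodTheta I) (hu : u ∈ D.B) (huI : u ∈ I)
    (hI : u + 1 ∈ I) (hBig : u + 1 ∉ D.BigB) : u + 1 ∈ D.B := by
  rcases hg with hr | hs | ⟨x, hx⟩
  · exact absurd hu (hr.notMem_B huI)
  · exact (hs.mem_B_iff hI).2 hBig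
  · have := (hx.mem_B_iff huI).1 hu
    exact (hx.mem_B_iff hI).2 (by omega)

theorem safeAfter_of_mem_theta {lo hi : ℤ} (hg : D.GoodTheta (Finset.Icc lo hi))
    (hBig : ∀ w, lo ≤ w → w ≤ hi → w ∉ D.BigB) (hu : u ∈ D.B) (hlo : lo ≤ u) (hhi : u ≤ hi)
    (htop : u = hi → SafeAfter D.R D.B S.l u) : SafeAfter D.R D.B S.l u := by
  rcases eq_or_lt_of_le hhi with h | h
  · exact htop h
  · exact safeAfter_of_add_one_mem <| hg.add_one_mem_B hu (Finset.mem_Icc.2 ⟨hlo, hhi⟩)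
      (Finset.mem_Icc.2 ⟨by omega, by omega⟩) (hBig _ (by omega) (by omega))

theorem mem_Xi_or_theta (hT : D.T.Nonempty) :
    (∃ a b, D.IsBlock a b ∧ D.xiLo a ≤ u ∧ u ≤ D.xiHi b) ∨
    (∃ a b, D.FirstBlock a b ∧ u < D.xiLo a) ∨
    (∃ a b a' b', D.ConsecBlocks a b a' b' ∧ D.xiHi b < u ∧ u < D.xiLo a') ∨
    (∃ a b, D.LastBlock a b ∧ D.xiHi b < u) := by
  obtain ⟨a₁, b₁, hfb⟩ := exists_firstBlock hT
  by_cases hu₁ : u < D.xiLo a₁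
  · exact Or.inr (Or.inl ⟨a₁, b₁, hfb, hu₁⟩)
  obtain ⟨a, ⟨⟨b, hb⟩, hau⟩, hmax⟩ := Int.exists_greatest_of_bdd
    (P := fun a => (∃ b, D.IsBlock a b) ∧ D.xiLo a ≤ u)
    ⟨S.p, fun a ⟨⟨b, hb⟩, _⟩ => hb.le.trans hb.le_p⟩ ⟨a₁, ⟨b₁, hfb.1⟩, by omega⟩
  by_cases hub : u ≤ D.xiHi b
  · exact Or.inl ⟨a, b, hb, hau, hub⟩
  rcases hb.lastBlock_or_consecBlocks with hlb | ⟨a', b', hcb⟩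
  · exact Or.inr (Or.inr (Or.inr ⟨a, b, hlb, by omega⟩))
  · refine Or.inr (Or.inr (Or.inl ⟨a, b, a', b', hcb, by omega, ?_⟩))
    by_contra! h
    have := hmax a' ⟨⟨b', hcb.2.1⟩, h⟩
    linarith [hcb.2.2.1, hb.le]

namespace BlockConditions

variable (hC : D.BlockConditions)
include hC

theorem xiLo_notMem_BigB (hb : D.IsBlock a b) : D.xiLo a ∉ D.BigB := fun h => by
  obtain ⟨i, hai, hib, hi⟩ := hC.exists_BI_of_mem_BigB_of_mem_Xi hb h
    (D.mem_Xi_sub.2 ⟨le_rfl, hb.xiLo_le_xiHi⟩)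
  have := hb.two_le
  have := D.s_sub_one_add_two_le_of_mem_BI (by omega) (by linarith [hb.le_p]) hi
  have := S.s_add_two_mul_le (i := a - 1) (j := i - 1) (by omega) (by omega)
    (by linarith [hb.le_p])
  linarith [(D.xiLo_le_s (hb.nonempty le_rfl hb.le)).1]

theorem xiLo_mem_B_or_free (hb : D.IsBlock a b) :
    D.xiLo a ∈ D.B ∨
      (D.IsRigidI (D.Xi a (b - a)) ∧ ∀ w ∈ D.RI a, w ∉ D.R ∧ w ∉ D.B) := by
  have hmem : D.xiLo a ∈ D.Xi a (b - a) := D.mem_Xi_sub.2 ⟨le_rfl, hb.xiLo_le_xiHi⟩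
  rcases (hC.admissible_full a b hb).1.status with hs | hr | ⟨x, hx⟩
  · exact Or.inl ((hs.mem_B_iff hmem).2 (hC.xiLo_notMem_BigB hb))
  · refine Or.inr ⟨hr, fun w hw => ?_⟩
    have hwXi := hb.mem_Xi_of_mem_RI le_rfl hb.le hw
    exact ⟨fun hR => (hr.mem_R_iff hwXi).1 hR
      (D.mem_BigR.2 ⟨a, hb.two_le, hb.le.trans hb.le_p, hw⟩), hr.notMem_B hwXi⟩
  · obtain ⟨w, hw⟩ := hx.2.2.1
    rw [Finset.mem_inter] at hw
    have := (hx.mem_B_iff hw.2).1 hw.1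
    have := (D.mem_Xi_sub.1 hw.2).1
    exact Or.inl ((hx.mem_B_iff hmem).2 (by omega))

theorem safeAfter_of_add_one_eq_xiLo (hb : D.IsBlock a b) (hu : u + 1 = D.xiLo a)
    (hrig : D.IsRigidI (D.Xi a (b - a)) → D.lo a = 1) : SafeAfter D.R D.B S.l u := by
  rcases hC.xiLo_mem_B_or_free hb with h | ⟨hr, hfree⟩
  · exact safeAfter_of_add_one_mem (hu ▸ h)
  · refine safeAfter_of_free (by linarith [S.hl]) fun w h₁ h₂ => hfree w ?_
    rw [mem_RI_iff_xiLo, hrig hr]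
    omega

theorem safeAfter_of_xiHi_add_one_eq_xiLo (hcb : D.ConsecBlocks a b a' b')
    (heq : D.xiHi b + 1 = D.xiLo a') (hu : u = D.xiHi b - D.hi b) (hhi : D.hi b ≤ S.l - 2)
    (hfree : ∀ w, u < w → w ≤ D.xiHi b → w ∉ D.R ∧ w ∉ D.B) : SafeAfter D.R D.B S.l u := by
  have hb := hcb.1
  have := D.hi_nonneg b
  rcases hC.xiLo_mem_B_or_free hcb.2.1 with h | ⟨-, hRfree⟩
  · exact ⟨D.xiLo a', by omega, fun w h₁ h₂ => hfree w h₁ (by omega), Or.inl h⟩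
  obtain ⟨hob, hoa⟩ := hcb.odd_of_xiHi_add_one_eq_xiLo heq
  have := hcb.add_two_le
  have := S.s_add_l_le_of_odd (i := b) (j := a' - 1) (by linarith [hb.two_le, hb.le]) hob
    (by omega) (by linarith [hcb.2.1.le, hcb.2.1.le_p])
  rw [D.xiHi_of_odd hob] at heq hfree hu
  rw [D.xiLo_of_odd hoa] at heq
  refine safeAfter_of_free (by linarith [S.hl]) fun w h₁ h₂ => ?_
  by_cases hw : w ≤ S.s b + D.hi b - 1
  · exact hfree w h₁ hw
  · exact hRfree w ((D.mem_RI_of_odd hoa).2 ⟨by omega, by omega⟩)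

theorem safeAfter_of_support_tail (hb : D.IsBlock a b) (hsup : D.IsSupport (D.Xi a (b - a)))
    (hu : u = D.xiHi b - D.hi b) (hhi : D.hi b ≤ S.l - 2)
    (hfree : ∀ w, u < w → w ≤ D.xiHi b → w ∉ D.R ∧ w ∉ D.B) : SafeAfter D.R D.B S.l u := by
  have hFT3 : ¬ D.FullType3 a b := fun h => by
    obtain ⟨rfl, -, hhi', -⟩ := h
    omega
  have := D.hi_nonneg b
  have hsucc : ∀ {top : ℤ}, D.IsSupport (Finset.Icc (D.xiHi b + 1) top) → D.xiHi b < top →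
      D.xiHi b + 1 ∉ D.BigB → SafeAfter D.R D.B S.l u := fun hs htop hBig =>
    ⟨D.xiHi b + 1, by omega, fun w h₁ h₂ => hfree w h₁ (by omega),
      Or.inl ((hs.mem_B_iff (Finset.mem_Icc.2 ⟨le_rfl, by omega⟩)).2 hBig)⟩
  rcases hb.lastBlock_or_consecBlocks with hlb | ⟨a', b', hcb⟩
  · by_cases hn : S.n ≤ D.xiHi b
    · refine safeAfter_of_free (by linarith [S.hl]) fun w h₁ h₂ => ?_
      by_cases hw : w ≤ D.xiHi b
      exacts [hfree w h₁ hw, D.free_of_n_lt (by omega)]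
    · exact hsucc ((hC.support_last a b hlb hsup).resolve_right hFT3) (by omega)
        (hC.notMem_BigB_of_xiHi_lt hlb (by omega))
  · have := hC.xiHi_lt_xiLo_of_consecBlocks hcb
    rcases eq_or_lt_of_le (show D.xiHi b + 1 ≤ D.xiLo a' by omega) with heq | hlt
    · exact hC.safeAfter_of_xiHi_add_one_eq_xiLo hcb heq hu hhi hfree
    · exact hsucc ((hC.support_between a b a' b' hcb hsup).resolve_right hFT3) (by omega)
        (hC.notMem_BigB_of_between hcb (by omega) (by omega))

theorem even_and_eq_of_support (hb : D.IsBlock a b) (hsup : D.IsSupport (D.Xi a (b - a)))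
    (hu : u ∈ D.B) (huXi : u ∈ D.Xi a (b - a)) (hab : a < b) : Even a ∧ b = a + 1 := by
  have hR : ¬ (D.R ∩ D.Xi a (b - a)).Nonempty := by simp [hsup.1]
  obtain ⟨-, -, -, -, hty⟩ := (hC.admissible_full a b hb).1
  rcases hty with ⟨hk, -⟩ | ⟨hk, -⟩ | ⟨hk, -⟩ | ⟨-, -, -, -, -, hr⟩ | ⟨hk, he, -⟩ |
    ⟨-, -, -, -, -, hr | ⟨x, -, hs⟩⟩ | ⟨hk, he, -⟩ | ⟨-, -, -, -, -, -, -, x, -, hs⟩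
  · omega
  · omega
  · omega
  · exact absurd hu (hr.notMem_B huXi)
  · exact ⟨he, by omega⟩
  · exact absurd hu (hr.notMem_B huXi)
  · exact absurd hs.2.2.2.2 hR
  · exact ⟨he, by omega⟩
  · exact absurd hs.2.2.2.2 hR

theorem safeAfter_of_support_even (hb : D.IsBlock a (a + 1)) (he : Even a)
    (hsup : D.IsSupport (D.Xi a (a + 1 - a))) (hu : u = S.s a - D.hi a) :
    SafeAfter D.R D.B S.l u := by
  have := hb.two_le
  have := hb.le_p
  have := D.hi_nonneg a
  have := (D.xiLo_le_s (hb.nonempty le_rfl hb.le)).1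
  have := S.s_sub_one_add_two_le (i := a) (by omega) (by omega)
  have := S.s_sub_one_add_two_le (i := a + 1) (by omega) hb.le_p
  rw [add_sub_cancel_right] at this
  have hnext : S.s a + 1 ∈ D.Xi a (a + 1 - a) :=
    D.mem_Xi_sub.2 ⟨by omega, by linarith [(D.s_le_xiHi (hb.nonempty hb.le le_rfl)).1]⟩
  have hnotBig : S.s a + 1 ∉ D.BigB := fun h => by
    obtain ⟨j, hj₁, hj₂, hj⟩ := hC.exists_BI_of_mem_BigB_of_mem_Xi hb h hnext
    obtain rfl | rfl : j = a ∨ j = a + 1 := by omega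
    · rw [D.mem_BI_of_even he] at hj
      omega
    · rw [D.mem_BI_of_odd he.add_one] at hj
      omega
  refine ⟨S.s a + 1, by omega, fun w h₁ h₂ => hb.free_of_mem_BI hsup le_rfl (by omega) ?_,
    Or.inl ((hsup.mem_B_iff hnext).2 hnotBig)⟩
  rw [D.mem_BI_of_even he]
  omega

theorem safeAfter_of_support (hb : D.IsBlock a b) (hsup : D.IsSupport (D.Xi a (b - a)))
    (hu : u ∈ D.B) (huXi : u ∈ D.Xi a (b - a)) : SafeAfter D.R D.B S.l u := by
  by_cases hu₁ : u + 1 ∈ D.B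
  · exact safeAfter_of_add_one_mem hu₁
  have huBig := (hsup.mem_B_iff huXi).1 hu
  have hXb := hb.nonempty hb.le le_rfl
  have := hb.two_le
  have := hb.le
  have := hb.le_p
  have htop : D.xiHi b ∈ D.BigB := D.mem_BigB.2 ⟨b, by omega, hb.le_p,
    D.mem_BI_iff_xiHi.2 ⟨by linarith [D.one_le_lo b, D.lo_le_hi hXb], le_rfl⟩⟩
  obtain ⟨hau, hub⟩ := D.mem_Xi_sub.1 huXi
  have hu₁Xi : u + 1 ∈ D.Xi a (b - a) :=
    D.mem_Xi_sub.2 ⟨by omega, lt_of_le_of_ne hub (fun h => huBig (h ▸ htop))⟩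
  have hu₁Big : u + 1 ∈ D.BigB := by
    by_contra h
    exact hu₁ ((hsup.mem_B_iff hu₁Xi).2 h)
  obtain ⟨i, hai, hib, hi⟩ := hC.exists_BI_of_mem_BigB_of_mem_Xi hb hu₁Big hu₁Xi
  have hstart : u = D.xiHi i - D.hi i := by
    have hui : u ∉ D.BI i := fun h => huBig (D.mem_BigB.2 ⟨i, by omega, by omega, h⟩)
    rw [mem_BI_iff_xiHi] at hi hui
    omega
  have hfree := fun w => hb.free_of_mem_BI (w := w) hsup hai hib
  rcases eq_or_lt_of_le hib with rfl | hlt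
  · rcases eq_or_lt_of_le (D.hi_le i) with hhi | hhi
    · exact safeAfter_of_free (by linarith [S.hl]) fun w h₁ h₂ =>
        hfree w (D.mem_BI_iff_xiHi.2 ⟨by omega, by omega⟩)
    · exact hC.safeAfter_of_support_tail hb hsup hstart (by omega) fun w h₁ h₂ =>
        hfree w (D.mem_BI_iff_xiHi.2 ⟨by omega, h₂⟩)
  · obtain ⟨he, rfl⟩ := hC.even_and_eq_of_support hb hsup hu huXi (by omega)
    obtain rfl : i = a := by omega
    exact hC.safeAfter_of_support_even hb he hsup (by rwa [D.xiHi_of_even he] at hstart)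

theorem safeAfter_of_mem_Xi (hb : D.IsBlock a b) (hu : u ∈ D.B)
    (huXi : u ∈ D.Xi a (b - a)) : SafeAfter D.R D.B S.l u := by
  rcases (hC.admissible_full a b hb).1.status with hs | hr | ⟨x, hx⟩
  · exact hC.safeAfter_of_support hb hs hu huXi
  · exact absurd hu (hr.notMem_B huXi)
  have hux := (hx.mem_B_iff huXi).1 hu
  have := D.mem_Xi_sub.1 huXi
  have := D.mem_Xi_sub.1 hx.1
  rcases eq_or_lt_of_le hux with rfl | hlt
  · obtain ⟨r, hr⟩ := hx.2.2.2.2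
    rw [Finset.mem_inter] at hr
    have := (hx.mem_R_iff hr.2).1 hr.1
    have := D.mem_Xi_sub.1 hr.2
    refine safeAfter_of_free (by linarith [S.hl]) fun w h₁ h₂ => ?_
    have hwXi : w ∈ D.Xi a (b - a) := D.mem_Xi_sub.2 ⟨by omega, by omega⟩
    exact ⟨fun h => by have := (hx.mem_R_iff hwXi).1 h; omega,
      fun h => by have := (hx.mem_B_iff hwXi).1 h; omega⟩
  · exact safeAfter_of_add_one_mem ((hx.mem_B_iff (D.mem_Xi_sub.2 ⟨by omega, by omega⟩)).2 hlt)

theorem safeAfter (hT : D.T.Nonempty) (hu : u ∈ D.B) : SafeAfter D.R D.B S.l u := by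
  obtain ⟨h₁, hn⟩ := Finset.mem_Icc.1 (D.hB hu)
  have hl := S.hl
  rcases mem_Xi_or_theta (u := u) hT with ⟨a, b, hb, huXi⟩ | ⟨a, b, hfb, hua⟩ |
    ⟨a, b, a', b', hcb, hbu, hua'⟩ | ⟨a, b, hlb, hbu⟩
  · exact hC.safeAfter_of_mem_Xi hb hu (D.mem_Xi_sub.2 huXi)
  · refine safeAfter_of_mem_theta (hC.goodTheta_first a b hfb)
      (fun w _ hw => hC.notMem_BigB_of_lt_xiLo hfb (by omega)) hu h₁ (by omega) fun htop =>
      hC.safeAfter_of_add_one_eq_xiLo hfb.1 (by omega) fun hr => ?_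
    rcases hC.rigid_first a b hfb hr with hrI | hF
    · exact absurd hu (hrI.notMem_B (Finset.mem_Icc.2 ⟨h₁, by omega⟩))
    · exact hF.2.1
  · refine safeAfter_of_mem_theta (hC.goodTheta_between a b a' b' hcb)
      (fun w hw hw' => hC.notMem_BigB_of_between hcb (by omega) (by omega)) hu (by omega)
      (by omega) fun htop => hC.safeAfter_of_add_one_eq_xiLo hcb.2.1 (by omega) fun hr => ?_
    rcases hC.rigid_between a b a' b' hcb hr with hrI | hF
    · exact absurd hu (hrI.notMem_B (Finset.mem_Icc.2 ⟨by omega, by omega⟩))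
    · exact hF.2.1
  · exact safeAfter_of_mem_theta (hC.goodTheta_last a b hlb)
      (fun w hw _ => hC.notMem_BigB_of_xiHi_lt hlb (by omega)) hu (by omega) hn fun htop =>
      safeAfter_of_free (by omega) fun w h₁ _ => D.free_of_n_lt (by omega)

end BlockConditions

end CDatum

/-- every well-configured `C`-datum is rigid. -/
theorem stmt10 {S : NakSetup} (D : CDatum S) (h : D.WellConfigured) : D.Rigid := by
  have hC := h.blockConditions
  refine ⟨?_, fun i _ _ ho => ⟨?_, hC.l_add_one_le_lo_add_lo_add_one ho, fun hd => ⟨?_, ?_⟩⟩,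
    fun i _ _ he => ⟨hC.hi_add_hi_add_one_le he, ?_⟩, fun i h2 hp => hC.inter_RI_BI_eq_empty h2 hp⟩
  · rcases h with ⟨-, x, -, -, hR, hB⟩ | ⟨hT, -⟩
    · intro u hu v hv huv
      simp only [hB, hR, Finset.mem_Icc] at hu hv
      omega
    · exact fun u hu v hv => exists_gap_of_safeAfter D.hRB (fun w hw => hC.safeAfter hT hw) hu hv
  · simpa using hC.hi_add_hi_add_one_le (j := i - 1) (ho.sub_odd odd_one)
  · exact hC.hi_le_lo_add_two_add_one hd ho
  · simpa using hC.hi_le_lo_add_two_add_one hd (j := i - 2) (ho.sub_even even_two)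
  · simpa using hC.l_add_one_le_lo_add_lo_add_one (j := i - 1) (he.sub_odd odd_one)
end

section
/- Let Γ = Γ¹ ⊔ Γ² be a finite set written as a disjoint union, and let Ψ = Ψ¹ ∪ Ψ² be a set of subsets of Γ, where every element of Ψ¹ is a subset of Γ¹. If Ψ¹ is a reducing set of Γ¹ and {ξ ∩ Γ² : ξ ∈ Ψ²} is a reducing set of Γ², then Ψ is a reducing set of Γ. -/
variable {α : Type*} [DecidableEq α]

/-- One step of the reduction: remove `a` from every member of `Ψ`. -/
def reduceStep (a : α) (Ψ : Set (Finset α)) : Set (Finset α) :=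
  (fun χ => χ.erase a) '' Ψ

/-- `ReducingChain L Ψ` says that, processing the elements of `L` in order,
at each step the singleton of the current element belongs to the current
(iteratively reduced) family. -/
def ReducingChain : List α → Set (Finset α) → Prop
  | [], _ => True
  | a :: rest, Ψ => ({a} : Finset α) ∈ Ψ ∧ ReducingChain rest (reduceStep a Ψ)

/-- `Ψ` is a reducing set of the finite set `Γ`: the elements of `Γ` can be ordered
`α_0, …, α_k` so that `{α_i} ∈ Ψ_i` for all `i`, where `Ψ_0 = Ψ` and
`Ψ_{i+1} = {χ \ {α_i} : χ ∈ Ψ_i}`. -/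
def IsReducingSet (Γ : Finset α) (Ψ : Set (Finset α)) : Prop :=
  ∃ L : List α, L.Nodup ∧ L.toFinset = Γ ∧ ReducingChain L Ψ

/-! Removing the elements of `Γ₁` first, a reduction order of `Γ₁` followed by one of `Γ₂`
is a reduction order of `Γ₁ ∪ Γ₂`; once `Γ₁` is gone, a member `ξ ⊆ Γ₁ ∪ Γ₂` of `Ψ` has
become `ξ \ Γ₁ = ξ ∩ Γ₂`. -/

theorem ReducingChain.mono {Ψ Ψ' : Set (Finset α)} (h : Ψ ⊆ Ψ') :
    ∀ {L : List α}, ReducingChain L Ψ → ReducingChain L Ψ'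
  | [], _ => trivial
  | _ :: _, ⟨ha, hrest⟩ => ⟨h ha, ReducingChain.mono (Set.image_mono h) hrest⟩

theorem image_sdiff_cons (a : α) (L : List α) (Ψ : Set (Finset α)) :
    (fun χ => χ \ L.toFinset) '' reduceStep a Ψ = (fun χ => χ \ (a :: L).toFinset) '' Ψ := by
  simp only [reduceStep, Set.image_image, List.toFinset_cons, Finset.sdiff_insert,
    Finset.erase_sdiff_comm]

theorem ReducingChain.append :
    ∀ {L₁ : List α} {Ψ : Set (Finset α)} {L₂ : List α}, ReducingChain L₁ Ψ →
      ReducingChain L₂ ((fun χ => χ \ L₁.toFinset) '' Ψ) → ReducingChain (L₁ ++ L₂) Ψ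
  | [], Ψ, _, _, h₂ => by simpa using h₂
  | a :: rest, Ψ, _, ⟨ha, hrest⟩, h₂ =>
    ⟨ha, hrest.append (by rwa [image_sdiff_cons])⟩

theorem IsReducingSet.mono {Γ : Finset α} {Ψ Ψ' : Set (Finset α)} (h : Ψ ⊆ Ψ')
    (hΨ : IsReducingSet Γ Ψ) : IsReducingSet Γ Ψ' :=
  let ⟨L, hnd, hL, hc⟩ := hΨ
  ⟨L, hnd, hL, hc.mono h⟩

theorem IsReducingSet.union {Γ₁ Γ₂ : Finset α} {Ψ : Set (Finset α)} (hdisj : Disjoint Γ₁ Γ₂)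
    (h₁ : IsReducingSet Γ₁ Ψ) (h₂ : IsReducingSet Γ₂ ((fun χ => χ \ Γ₁) '' Ψ)) :
    IsReducingSet (Γ₁ ∪ Γ₂) Ψ := by
  obtain ⟨L₁, hnd₁, rfl, hc₁⟩ := h₁
  obtain ⟨L₂, hnd₂, rfl, hc₂⟩ := h₂
  refine ⟨L₁ ++ L₂, ?_, List.toFinset_append, hc₁.append hc₂⟩
  exact hnd₁.append hnd₂ (List.disjoint_toFinset_iff_disjoint.mp hdisj)

theorem Finset.inter_eq_sdiff_of_subset_union {s t u : Finset α} (hs : s ⊆ t ∪ u)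
    (htu : Disjoint t u) : s ∩ u = s \ t := by
  ext x
  simp only [Finset.mem_inter, Finset.mem_sdiff]
  constructor
  · rintro ⟨hxs, hxu⟩
    exact ⟨hxs, Finset.disjoint_right.mp htu hxu⟩
  · rintro ⟨hxs, hxt⟩
    exact ⟨hxs, (Finset.mem_union.mp (hs hxs)).resolve_left hxt⟩

theorem stmt14_general (Γ Γ₁ Γ₂ : Finset α) (Ψ Ψ₁ Ψ₂ : Set (Finset α))
    (hΓ : Γ = Γ₁ ∪ Γ₂) (hdisj : Disjoint Γ₁ Γ₂)
    (hΨ : Ψ = Ψ₁ ∪ Ψ₂) (hΨsub : ∀ χ ∈ Ψ, χ ⊆ Γ)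
    (h1 : IsReducingSet Γ₁ Ψ₁)
    (h2 : IsReducingSet Γ₂ ((fun ξ => ξ ∩ Γ₂) '' Ψ₂)) :
    IsReducingSet Γ Ψ := by
  subst hΓ hΨ
  have hΨ₂ : (fun ξ => ξ ∩ Γ₂) '' Ψ₂ ⊆ (fun χ => χ \ Γ₁) '' (Ψ₁ ∪ Ψ₂) := by
    rintro _ ⟨ξ, hξ, rfl⟩
    have hξΨ : ξ ∈ Ψ₁ ∪ Ψ₂ := Or.inr hξ
    exact ⟨ξ, hξΨ, (Finset.inter_eq_sdiff_of_subset_union (hΨsub ξ hξΨ) hdisj).symm⟩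
  exact (h1.mono Set.subset_union_left).union hdisj (h2.mono hΨ₂)

/-- if `Γ = Γ¹ ⊔ Γ²`, `Ψ = Ψ¹ ∪ Ψ²` is a set of subsets of `Γ` with
every member of `Ψ¹` a subset of `Γ¹`, `Ψ¹` is a reducing set of `Γ¹`, and
`{ξ ∩ Γ² : ξ ∈ Ψ²}` is a reducing set of `Γ²`, then `Ψ` is a reducing set of `Γ`. -/
theorem stmt14 (Γ Γ₁ Γ₂ : Finset α) (Ψ Ψ₁ Ψ₂ : Set (Finset α))
    (hΓ : Γ = Γ₁ ∪ Γ₂) (hdisj : Disjoint Γ₁ Γ₂)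
    (hΨ : Ψ = Ψ₁ ∪ Ψ₂) (hΨsub : ∀ χ ∈ Ψ, χ ⊆ Γ) (hΨ₁sub : ∀ χ ∈ Ψ₁, χ ⊆ Γ₁)
    (h1 : IsReducingSet Γ₁ Ψ₁)
    (h2 : IsReducingSet Γ₂ ((fun ξ => ξ ∩ Γ₂) '' Ψ₂)) :
    IsReducingSet Γ Ψ :=
  stmt14_general Γ Γ₁ Γ₂ Ψ Ψ₁ Ψ₂ hΓ hdisj hΨ hΨsub h1 h2
end
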